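/- arXiv:2311.08947 — 2 statements merged into one kernel-verified Lean document; each statement's English description precedes it below -/
import Mathlib

section
/- Let n ≥ 1, let α = (α_1,…,α_n) ∈ ℂⁿ with Re α_i > 0 for all i, and let μ ∈ ℂ with Re μ > 0. Then the integral ∫_{Δ_n} (∏_{i=1}^n t_i^{α_i−1}) (1−|t|)^{μ−1} dt converges absolutely and equals Γ(α_1)⋯Γ(α_n)·Γ(μ) / Γ(α_1+⋯+α_n+μ). -/
open MeasureTheory Complex

noncomputable section

/-- The open simplex `{t ∈ ℝⁿ : tᵢ > 0, t₁ + ⋯ + tₙ < 1}`. -/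
def openSimplex (n : ℕ) : Set (Fin n → ℝ) := {t | (∀ i, 0 < t i) ∧ ∑ i, t i < 1}

open Set Module

/-!
Induction on `n`. The map `(x, s) ↦ (x, (1 - x) • s)` carries `(0, 1) × Δ_n` bijectively onto
`Δ_{n+1}` (read in the coordinates `t = (t₀, t₁, …, tₙ)`) with Jacobian `(1 - x)ⁿ`, and turns the
integrand for `α` into `x ^ (α₀ - 1) (1 - x) ^ (β - 1)` times the integrand for `(α₁, …, αₙ)` at `s`,
where `β = α₁ + ⋯ + αₙ + μ`. By Fubini the integral factors as the beta integral `B(α₀, β)` times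
the `n`-dimensional one, and `B(α₀, β) = Γ(α₀) Γ(β) / Γ(α₀ + β)` cancels the `Γ(β)` of the latter.
-/

theorem Complex.cpow_sum {ι : Type*} {z : ℂ} (hz : z ≠ 0) (s : Finset ι) (w : ι → ℂ) :
    z ^ (∑ i ∈ s, w i) = ∏ i ∈ s, z ^ w i := by
  induction s using Finset.cons_induction with
  | empty => simp
  | cons i s _ ih => rw [Finset.sum_cons, Finset.prod_cons, cpow_add _ _ hz, ih]

/-- The map preserves `{0} × E`, acts on it as `c`, and induces the identity on the quotient. -/
theorem LinearMap.det_fst_prod_smul_snd_sub_smulRight {𝕜 E : Type*} [Field 𝕜] [AddCommGroup E]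
    [Module 𝕜 E] [FiniteDimensional 𝕜 E] (c : 𝕜) (v : E) :
    ((LinearMap.fst 𝕜 𝕜 E).prod (c • LinearMap.snd 𝕜 𝕜 E - (LinearMap.fst 𝕜 𝕜 E).smulRight v)).det
      = c ^ finrank 𝕜 E := by
  set L := (LinearMap.fst 𝕜 𝕜 E).prod (c • LinearMap.snd 𝕜 𝕜 E - (LinearMap.fst 𝕜 𝕜 E).smulRight v)
  set W := LinearMap.range (LinearMap.inr 𝕜 𝕜 E)
  have hW : W ≤ W.comap L := by
    rintro _ ⟨k, rfl⟩
    exact ⟨c • k, by simp [L]⟩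
  have hrestrict : L.restrict (p := W) (q := W) hW = c • LinearMap.id := by
    ext ⟨_, k, rfl⟩ <;> simp [L]
  have hquot : W.mapQ W L hW = LinearMap.id := by
    refine Submodule.linearMap_qext W (LinearMap.ext fun x => ?_)
    simp only [LinearMap.comp_apply, Submodule.mkQ_apply, Submodule.mapQ_apply,
      LinearMap.id_apply, Submodule.Quotient.eq]
    exact ⟨(c - 1) • x.2 - x.1 • v, by ext <;> simp [L, sub_smul]; abel⟩
  have hfinrank : finrank 𝕜 W = finrank 𝕜 E :=
    LinearMap.finrank_range_of_inj LinearMap.inr_injective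
  rw [L.det_eq_det_mul_det W hW, hrestrict, hquot, LinearMap.det_smul, LinearMap.det_id,
    LinearMap.det_id, hfinrank, mul_one, mul_one]

section FiberScale

variable {E F : Type*} [NormedAddCommGroup E] [NormedSpace ℝ E]

def fiberScale (p : ℝ × E) : ℝ × E := (p.1, (1 - p.1) • p.2)

theorem hasFDerivAt_fiberScale (p : ℝ × E) :
    HasFDerivAt fiberScale ((ContinuousLinearMap.fst ℝ ℝ E).prod
      ((1 - p.1) • ContinuousLinearMap.snd ℝ ℝ E - (ContinuousLinearMap.fst ℝ ℝ E).smulRight p.2))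
      p := by
  have hfst : HasFDerivAt (Prod.fst : ℝ × E → ℝ) (ContinuousLinearMap.fst ℝ ℝ E) p :=
    hasFDerivAt_fst
  exact (hfst.prodMk ((hfst.const_sub 1).smul hasFDerivAt_snd)).congr_fderiv
    (by ext <;> simp [sub_eq_add_neg])

theorem injOn_fiberScale {U : Set (ℝ × E)} (hU : ∀ p ∈ U, p.1 < 1) : InjOn fiberScale U := by
  intro p hp q _ hpq
  obtain ⟨h1, h2⟩ := Prod.ext_iff.mp hpq
  simp only [fiberScale] at h1 h2
  rw [h1] at h2
  exact Prod.ext h1 (smul_right_injective E (by linarith [hU p hp, h1]) h2)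

theorem abs_det_fderiv_fiberScale [FiniteDimensional ℝ E] {p : ℝ × E} (hp : p.1 < 1) :
    |((ContinuousLinearMap.fst ℝ ℝ E).prod ((1 - p.1) • ContinuousLinearMap.snd ℝ ℝ E -
      (ContinuousLinearMap.fst ℝ ℝ E).smulRight p.2)).det| = (1 - p.1) ^ finrank ℝ E := by
  rw [ContinuousLinearMap.det]
  convert abs_of_pos (pow_pos (sub_pos.2 hp) (finrank ℝ E))
  exact LinearMap.det_fst_prod_smul_snd_sub_smulRight _ _

variable [FiniteDimensional ℝ E] [MeasurableSpace E] [BorelSpace E] (ν : Measure E)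
  [ν.IsAddHaarMeasure] [NormedAddCommGroup F] [NormedSpace ℝ F] {U : Set (ℝ × E)}

theorem integrableOn_image_fiberScale_iff (hU : MeasurableSet U) (hU1 : ∀ p ∈ U, p.1 < 1)
    (g : ℝ × E → F) :
    IntegrableOn g (fiberScale '' U) (volume.prod ν) ↔
      IntegrableOn (fun p => (1 - p.1) ^ finrank ℝ E • g (fiberScale p)) U (volume.prod ν) := by
  rw [integrableOn_image_iff_integrableOn_abs_det_fderiv_smul (volume.prod ν) hU
    (fun p _ => (hasFDerivAt_fiberScale p).hasFDerivWithinAt) (injOn_fiberScale hU1)]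
  refine integrableOn_congr_fun (fun p hp => ?_) hU
  rw [abs_det_fderiv_fiberScale (hU1 p hp)]

theorem setIntegral_image_fiberScale (hU : MeasurableSet U) (hU1 : ∀ p ∈ U, p.1 < 1)
    (g : ℝ × E → F) :
    ∫ q in fiberScale '' U, g q ∂(volume.prod ν) =
      ∫ p in U, (1 - p.1) ^ finrank ℝ E • g (fiberScale p) ∂(volume.prod ν) := by
  rw [integral_image_eq_integral_abs_det_fderiv_smul (volume.prod ν) hU
    (fun p _ => (hasFDerivAt_fiberScale p).hasFDerivWithinAt) (injOn_fiberScale hU1)]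
  refine setIntegral_congr_fun hU (fun p hp => ?_)
  rw [abs_det_fderiv_fiberScale (hU1 p hp)]

end FiberScale

theorem integrableOn_Ioo_cpow_mul_one_sub_cpow {u v : ℂ} (hu : 0 < u.re) (hv : 0 < v.re) :
    IntegrableOn (fun x : ℝ => (x : ℂ) ^ (u - 1) * (1 - (x : ℂ)) ^ (v - 1)) (Ioo 0 1) := by
  have h := betaIntegral_convergent hu hv
  rw [intervalIntegrable_iff_integrableOn_Ioc_of_le zero_le_one] at h
  exact h.mono_set Ioo_subset_Ioc_self

theorem setIntegral_Ioo_cpow_mul_one_sub_cpow {u v : ℂ} (hu : 0 < u.re) (hv : 0 < v.re) :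
    ∫ x in Ioo (0 : ℝ) 1, (x : ℂ) ^ (u - 1) * (1 - (x : ℂ)) ^ (v - 1) =
      Gamma u * Gamma v / Gamma (u + v) := by
  rw [← integral_Ioc_eq_integral_Ioo, ← intervalIntegral.integral_of_le zero_le_one,
    ← betaIntegral, Gamma_mul_Gamma_eq_betaIntegral hu hv,
    mul_div_cancel_left₀ _ (Gamma_ne_zero_of_re_pos (by rw [add_re]; linarith))]

def dirichletIntegrand {n : ℕ} (α : Fin n → ℂ) (μ : ℂ) (t : Fin n → ℝ) : ℂ :=
  (∏ i, (t i : ℂ) ^ (α i - 1)) * ((1 - ∑ i, t i : ℝ) : ℂ) ^ (μ - 1)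

theorem openSimplex_zero : openSimplex 0 = univ := by
  ext t
  simp [openSimplex]

theorem dirichletIntegrand_zero (α : Fin 0 → ℂ) (μ : ℂ) : dirichletIntegrand α μ = 1 := by
  funext t
  simp [dirichletIntegrand]

theorem measurableSet_openSimplex (n : ℕ) : MeasurableSet (openSimplex n) := by
  simp only [openSimplex, ofPred_and, ofPred_forall]
  exact (MeasurableSet.iInter fun i => measurableSet_lt measurable_const (measurable_pi_apply i))
    |>.inter (measurableSet_lt (Finset.measurable_sum _ fun i _ => measurable_pi_apply i) measurable_const)

theorem mem_image_fiberScale_Ioo_prod_openSimplex {n : ℕ} {q : ℝ × (Fin n → ℝ)} :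
    q ∈ fiberScale '' (Ioo 0 1 ×ˢ openSimplex n) ↔
      0 < q.1 ∧ (∀ i, 0 < q.2 i) ∧ q.1 + ∑ i, q.2 i < 1 := by
  constructor
  · rintro ⟨⟨x, s⟩, ⟨⟨hx0, hx1⟩, hs0, hs1⟩, rfl⟩
    have hc : 0 < 1 - x := by linarith
    refine ⟨hx0, fun i => mul_pos hc (hs0 i), ?_⟩
    simp only [fiberScale, Pi.smul_apply, smul_eq_mul, ← Finset.mul_sum]
    nlinarith
  · rintro ⟨hq0, hq2, hq1⟩
    have hc : 0 < 1 - q.1 := by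
      linarith [Finset.sum_nonneg (s := Finset.univ) fun i _ => (hq2 i).le]
    refine ⟨(q.1, (1 - q.1)⁻¹ • q.2), ⟨⟨hq0, by linarith⟩, fun i => ?_, ?_⟩, ?_⟩
    · exact mul_pos (inv_pos.2 hc) (hq2 i)
    · simp only [Pi.smul_apply, smul_eq_mul, ← Finset.mul_sum]
      rw [inv_mul_lt_iff₀ hc]
      linarith
    · simp [fiberScale, smul_smul, mul_inv_cancel₀ hc.ne']

theorem preimage_piFinSuccAbove_symm_openSimplex (n : ℕ) :
    (MeasurableEquiv.piFinSuccAbove (fun _ => ℝ) 0).symm ⁻¹' openSimplex (n + 1) =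
      fiberScale '' (Ioo 0 1 ×ˢ openSimplex n) := by
  ext q
  rw [mem_image_fiberScale_Ioo_prod_openSimplex]
  simp [openSimplex, MeasurableEquiv.piFinSuccAbove_symm_apply, Fin.insertNthEquiv,
    Fin.forall_fin_succ, Fin.sum_univ_succ, and_assoc]

theorem prod_ofReal_smul_cpow {n : ℕ} {c : ℝ} (hc : 0 < c) {s : Fin n → ℝ} (hs : ∀ i, 0 ≤ s i)
    (a : Fin n → ℂ) :
    ∏ i, (((c • s) i : ℝ) : ℂ) ^ (a i - 1) =
      (c : ℂ) ^ (∑ i, a i - n) * ∏ i, (s i : ℂ) ^ (a i - 1) := by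
  have hsum : ∑ i, a i - n = ∑ i, (a i - 1) := by simp [Finset.sum_sub_distrib]
  rw [hsum, cpow_sum (ofReal_ne_zero.2 hc.ne'), ← Finset.prod_mul_distrib]
  refine Finset.prod_congr rfl fun i _ => ?_
  rw [Pi.smul_apply, smul_eq_mul, ofReal_mul, mul_cpow_ofReal_nonneg hc.le (hs i)]

theorem dirichletIntegrand_cons_fiberScale {n : ℕ} (α : Fin (n + 1) → ℂ) (μ : ℂ) {x : ℝ}
    (hx : x < 1) {s : Fin n → ℝ} (hs : s ∈ openSimplex n) :
    (1 - x) ^ n • dirichletIntegrand α μ (Fin.cons x ((1 - x) • s)) =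
      (x : ℂ) ^ (α 0 - 1) * (1 - (x : ℂ)) ^ (∑ i, Fin.tail α i + μ - 1) *
        dirichletIntegrand (Fin.tail α) μ s := by
  have hc : 0 < 1 - x := by linarith
  have hc' : ((1 - x : ℝ) : ℂ) ≠ 0 := ofReal_ne_zero.2 hc.ne'
  have hlast : 1 - (x + ∑ i, ((1 - x) • s) i) = (1 - x) * (1 - ∑ i, s i) := by
    simp only [Pi.smul_apply, smul_eq_mul, ← Finset.mul_sum]; ring
  simp only [dirichletIntegrand, Fin.prod_univ_succ, Fin.sum_univ_succ, Fin.cons_zero,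
    Fin.cons_succ, Fin.tail]
  rw [prod_ofReal_smul_cpow hc (fun i => (hs.1 i).le), hlast, ofReal_mul,
    mul_cpow_ofReal_nonneg hc.le (by linarith [hs.2]), real_smul, ofReal_pow, ← cpow_natCast,
    show (1 - (x : ℂ)) = ((1 - x : ℝ) : ℂ) by push_cast; ring]
  have hexp : ((1 - x : ℝ) : ℂ) ^ (∑ i : Fin n, α i.succ + μ - 1) = ((1 - x : ℝ) : ℂ) ^ (n : ℂ) *
      (((1 - x : ℝ) : ℂ) ^ (∑ i : Fin n, α i.succ - n) * ((1 - x : ℝ) : ℂ) ^ (μ - 1)) := by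
    rw [← cpow_add _ _ hc', ← cpow_add _ _ hc']; ring_nf
  rw [hexp]; ring

theorem integrableOn_dirichletIntegrand_succ_iff {n : ℕ} (α : Fin (n + 1) → ℂ) (μ : ℂ) :
    IntegrableOn (dirichletIntegrand α μ) (openSimplex (n + 1)) ↔
      IntegrableOn (fun p : ℝ × (Fin n → ℝ) =>
        (p.1 : ℂ) ^ (α 0 - 1) * (1 - (p.1 : ℂ)) ^ (∑ i, Fin.tail α i + μ - 1) *
          dirichletIntegrand (Fin.tail α) μ p.2) (Ioo 0 1 ×ˢ openSimplex n) := by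
  have hU : MeasurableSet (Ioo (0 : ℝ) 1 ×ˢ openSimplex n) :=
    measurableSet_Ioo.prod (measurableSet_openSimplex n)
  rw [← ((volume_preserving_piFinSuccAbove (fun _ => ℝ) 0).symm _).integrableOn_comp_preimage
    (MeasurableEquiv.measurableEmbedding _), preimage_piFinSuccAbove_symm_openSimplex,
    Measure.volume_eq_prod, integrableOn_image_fiberScale_iff volume hU fun p hp => hp.1.2]
  refine integrableOn_congr_fun (fun p hp => ?_) hU
  simpa [MeasurableEquiv.piFinSuccAbove_symm_apply, Fin.insertNthEquiv, fiberScale] using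
    dirichletIntegrand_cons_fiberScale α μ hp.1.2 hp.2

theorem setIntegral_dirichletIntegrand_succ {n : ℕ} (α : Fin (n + 1) → ℂ) (μ : ℂ) :
    ∫ t in openSimplex (n + 1), dirichletIntegrand α μ t =
      (∫ x in Ioo (0 : ℝ) 1, (x : ℂ) ^ (α 0 - 1) * (1 - (x : ℂ)) ^ (∑ i, Fin.tail α i + μ - 1)) *
        ∫ s in openSimplex n, dirichletIntegrand (Fin.tail α) μ s := by
  have hU : MeasurableSet (Ioo (0 : ℝ) 1 ×ˢ openSimplex n) :=
    measurableSet_Ioo.prod (measurableSet_openSimplex n)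
  rw [← ((volume_preserving_piFinSuccAbove (fun _ => ℝ) 0).symm _).setIntegral_preimage_emb
    (MeasurableEquiv.measurableEmbedding _), preimage_piFinSuccAbove_symm_openSimplex,
    Measure.volume_eq_prod, setIntegral_image_fiberScale volume hU fun p hp => hp.1.2, ← setIntegral_prod_mul]
  refine setIntegral_congr_fun hU (fun p hp => ?_)
  simpa [MeasurableEquiv.piFinSuccAbove_symm_apply, Fin.insertNthEquiv, fiberScale] using
    dirichletIntegrand_cons_fiberScale α μ hp.1.2 hp.2

theorem re_sum_add_pos {n : ℕ} {α : Fin n → ℂ} (hα : ∀ i, 0 < (α i).re) {μ : ℂ} (hμ : 0 < μ.re) :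
    0 < (∑ i, α i + μ).re := by
  rw [add_re, re_sum]
  exact add_pos_of_nonneg_of_pos (Finset.sum_nonneg fun i _ => (hα i).le) hμ

theorem integrableOn_dirichletIntegrand {n : ℕ} {α : Fin n → ℂ} (hα : ∀ i, 0 < (α i).re)
    {μ : ℂ} (hμ : 0 < μ.re) : IntegrableOn (dirichletIntegrand α μ) (openSimplex n) := by
  induction n with
  | zero =>
    rw [openSimplex_zero, dirichletIntegrand_zero]
    exact (integrable_const 1).integrableOn
  | succ n ih =>
    have hαt : ∀ i, 0 < (Fin.tail α i).re := fun i => hα i.succ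
    rw [integrableOn_dirichletIntegrand_succ_iff, IntegrableOn, Measure.volume_eq_prod,
      ← Measure.prod_restrict]
    exact (integrableOn_Ioo_cpow_mul_one_sub_cpow (hα 0) (re_sum_add_pos hαt hμ)).mul_prod
      (ih hαt)

theorem setIntegral_dirichletIntegrand {n : ℕ} {α : Fin n → ℂ} (hα : ∀ i, 0 < (α i).re)
    {μ : ℂ} (hμ : 0 < μ.re) :
    ∫ t in openSimplex n, dirichletIntegrand α μ t =
      (∏ i, Gamma (α i)) * Gamma μ / Gamma (∑ i, α i + μ) := by
  induction n with
  | zero =>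
    rw [openSimplex_zero, dirichletIntegrand_zero, Measure.restrict_univ, Pi.one_def,
      integral_const, measureReal_def, volume_pi, Measure.pi_univ]
    simp [div_self (Gamma_ne_zero_of_re_pos hμ)]
  | succ n ih =>
    have hαt : ∀ i, 0 < (Fin.tail α i).re := fun i => hα i.succ
    have hβ := re_sum_add_pos hαt hμ
    rw [setIntegral_dirichletIntegrand_succ, setIntegral_Ioo_cpow_mul_one_sub_cpow (hα 0) hβ,
      ih hαt, Fin.prod_univ_succ, Fin.sum_univ_succ]
    have hΓβ := Gamma_ne_zero_of_re_pos hβ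
    simp only [Fin.tail] at hΓβ ⊢
    field_simp
    rw [add_assoc]

theorem stmt0_general (n : ℕ) (α : Fin n → ℂ) (hα : ∀ i, 0 < (α i).re)
    (μ : ℂ) (hμ : 0 < μ.re) :
    IntegrableOn
      (fun t : Fin n → ℝ =>
        (∏ i, (t i : ℂ) ^ (α i - 1)) * ((1 - ∑ i, t i : ℝ) : ℂ) ^ (μ - 1))
      (openSimplex n) ∧
    ∫ t in openSimplex n,
        (∏ i, (t i : ℂ) ^ (α i - 1)) * ((1 - ∑ i, t i : ℝ) : ℂ) ^ (μ - 1)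
      = (∏ i, Complex.Gamma (α i)) * Complex.Gamma μ /
          Complex.Gamma ((∑ i, α i) + μ) :=
  ⟨integrableOn_dirichletIntegrand hα hμ, setIntegral_dirichletIntegrand hα hμ⟩

theorem stmt0 (n : ℕ) (hn : 1 ≤ n) (α : Fin n → ℂ) (hα : ∀ i, 0 < (α i).re)
    (μ : ℂ) (hμ : 0 < μ.re) :
    IntegrableOn
      (fun t : Fin n → ℝ =>
        (∏ i, (t i : ℂ) ^ (α i - 1)) * ((1 - ∑ i, t i : ℝ) : ℂ) ^ (μ - 1))
      (openSimplex n) ∧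
    ∫ t in openSimplex n,
        (∏ i, (t i : ℂ) ^ (α i - 1)) * ((1 - ∑ i, t i : ℝ) : ℂ) ^ (μ - 1)
      = (∏ i, Complex.Gamma (α i)) * Complex.Gamma μ /
          Complex.Gamma ((∑ i, α i) + μ) :=
  stmt0_general n α hα μ hμ
end
end

section
/- Let n ≥ 1, λ = (λ_1,…,λ_n) ∈ ℂⁿ with λ_ν ∉ ℤ_{≤0} for all ν, and μ ∈ ℂ with |λ| + μ ∉ ℤ_{≤0}. Then for every m ∈ ℕⁿ the numbers (λ)_m and (|λ|+μ)_{|m|} are nonzero, and the ℂ-linear maps K, L on the ring ℂ[[x_1,…,x_n]] of formal power series defined by K(Σ_m c_m x^m) = Σ_m [Γ(λ)/Γ(|λ|+μ)]·[(λ)_m/(|λ|+μ)_{|m|}]·c_m x^m and L(Σ_m c_m x^m) = Σ_m [Γ(|λ|+μ)/Γ(λ)]·[(|λ|+μ)_{|m|}/(λ)_m]·c_m x^m are mutually inverse bijections (K∘L = L∘K = identity); moreover, K and L map the subring of formal power series having a positive radius of convergence bijectively onto itself. -/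
open Complex

noncomputable section

/-- The Pochhammer symbol `(a)ₖ = a(a+1)⋯(a+k-1)`. -/
def poch (a : ℂ) (k : ℕ) : ℂ := ∏ i ∈ Finset.range k, (a + i)

/-- The coefficient multiplier of the transformation `K_x^{μ,λ}`. -/
def Kcoef {n : ℕ} (lam : Fin n → ℂ) (μ : ℂ) (m : Fin n →₀ ℕ) : ℂ :=
  (∏ i, Complex.Gamma (lam i)) / Complex.Gamma ((∑ i, lam i) + μ) *
    ((∏ i, poch (lam i) (m i)) / poch ((∑ i, lam i) + μ) (m.sum fun _ k => k))

/-- The coefficient multiplier of the transformation `L_x^{μ,λ}`. -/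
def Lcoef {n : ℕ} (lam : Fin n → ℂ) (μ : ℂ) (m : Fin n →₀ ℕ) : ℂ :=
  Complex.Gamma ((∑ i, lam i) + μ) / (∏ i, Complex.Gamma (lam i)) *
    (poch ((∑ i, lam i) + μ) (m.sum fun _ k => k) / ∏ i, poch (lam i) (m i))

/-- The transformation `K_x^{μ,λ}` on formal power series. -/
def Kmap {n : ℕ} (lam : Fin n → ℂ) (μ : ℂ)
    (f : MvPowerSeries (Fin n) ℂ) : MvPowerSeries (Fin n) ℂ :=
  fun m => Kcoef lam μ m * MvPowerSeries.coeff m f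

/-- The transformation `L_x^{μ,λ}` on formal power series. -/
def Lmap {n : ℕ} (lam : Fin n → ℂ) (μ : ℂ)
    (f : MvPowerSeries (Fin n) ℂ) : MvPowerSeries (Fin n) ℂ :=
  fun m => Lcoef lam μ m * MvPowerSeries.coeff m f

/-- A formal power series has a positive radius of convergence. -/
def HasPosRadius {n : ℕ} (f : MvPowerSeries (Fin n) ℂ) : Prop :=
  ∃ r : ℝ, 0 < r ∧
    Summable (fun m : Fin n →₀ ℕ =>
      ‖MvPowerSeries.coeff m f‖ * r ^ (m.sum fun _ k => k))

/-!
`K` and `L` act diagonally on monomials, with reciprocal multipliers, so they are mutually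
inverse. For `a ∉ ℤ_{≤0}` the Pochhammer symbol satisfies `N! ≤ M ^ N ‖(a)_N‖` for some `M`,
and always `‖(a)_N‖ ≤ (‖a‖ + 1) ^ N N!`; with the multinomial bound `|m|! ≤ n ^ |m| ∏ mᵢ!`, both
multipliers grow at most geometrically in `|m|`. Multiplying coefficients by such a sequence
shrinks the radius of convergence by at most a constant factor, so it stays positive.
-/

open Filter Finset
open scoped Nat

section Pochhammer

variable {a : ℂ}

lemma add_natCast_ne_zero_of_ne_intCast (ha : ∀ k : ℤ, k ≤ 0 → a ≠ k) (j : ℕ) : a + j ≠ 0 :=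
  fun h => ha (-j) (by omega) (by push_cast; linear_combination h)

lemma poch_ne_zero (ha : ∀ j : ℕ, a + j ≠ 0) (N : ℕ) : poch a N ≠ 0 :=
  prod_ne_zero_iff.2 fun j _ => ha j

lemma Gamma_ne_zero_of_add_natCast_ne_zero (ha : ∀ j : ℕ, a + j ≠ 0) : Gamma a ≠ 0 :=
  Gamma_ne_zero fun j h => ha j (by rw [h]; ring)

lemma norm_poch_le (a : ℂ) (N : ℕ) : ‖poch a N‖ ≤ (‖a‖ + 1) ^ N * N ! := by
  calc ‖poch a N‖ = ∏ j ∈ range N, ‖a + j‖ := norm_prod _ _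
    _ ≤ ∏ j ∈ range N, (‖a‖ + 1) * (j + 1) := by
        refine prod_le_prod (fun _ _ => norm_nonneg _) fun j _ => ?_
        have : ‖a + j‖ ≤ ‖a‖ + j := (norm_add_le _ _).trans_eq (by rw [Complex.norm_natCast])
        nlinarith [norm_nonneg a, (j.cast_nonneg : (0 : ℝ) ≤ j)]
    _ = (‖a‖ + 1) ^ N * N ! := by
        rw [prod_mul_distrib, prod_const, card_range, ← prod_range_add_one_eq_factorial]
        push_cast
        rfl

lemma factorial_le_pow_mul_norm_poch {M : ℝ} (hM : ∀ j : ℕ, (j + 1 : ℝ) ≤ M * ‖a + j‖)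
    (N : ℕ) : (N ! : ℝ) ≤ M ^ N * ‖poch a N‖ := by
  calc (N ! : ℝ) = ∏ j ∈ range N, ((j : ℝ) + 1) := by
        rw [← prod_range_add_one_eq_factorial]; push_cast; rfl
    _ ≤ ∏ j ∈ range N, M * ‖a + j‖ := prod_le_prod (fun _ _ => by positivity) fun j _ => hM j
    _ = M ^ N * ‖poch a N‖ := by rw [prod_mul_distrib, prod_const, card_range, poch, norm_prod]

lemma eventually_forall_natCast_add_one_le_mul_norm (ha : ∀ j : ℕ, a + j ≠ 0) :
    ∀ᶠ M in atTop, ∀ j : ℕ, (j + 1 : ℝ) ≤ M * ‖a + j‖ := by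
  have hpos (j : ℕ) : 0 < ‖a + j‖ := norm_pos_iff.2 (ha j)
  obtain ⟨M₀, hM₀⟩ : BddAbove (Set.range fun j : ℕ => (j + 1 : ℝ) / ‖a + j‖) := by
    refine (isBoundedUnder_of_eventually_le (a := 2) ?_).bddAbove_range
    filter_upwards [eventually_ge_atTop ⌈2 * ‖a‖ + 1⌉₊] with j hj
    have hj : 2 * ‖a‖ + 1 ≤ j := Nat.ceil_le.1 hj
    have : (j : ℝ) ≤ ‖a + j‖ + ‖a‖ := by
      simpa using norm_sub_le (a + j) a
    rw [div_le_iff₀ (hpos j)]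
    linarith
  filter_upwards [eventually_ge_atTop M₀] with M hM j
  have hj := hM₀ ⟨j, rfl⟩
  rw [div_le_iff₀ (hpos j)] at hj
  exact hj.trans (mul_le_mul_of_nonneg_right hM (norm_nonneg _))

variable {ι : Type*} [Fintype ι]

lemma norm_prod_poch_le (a : ι → ℂ) (m : ι → ℕ) :
    ‖∏ i, poch (a i) (m i)‖ ≤ (∑ i, ‖a i‖ + 1) ^ (∑ i, m i) * (∑ i, m i)! := by
  calc ‖∏ i, poch (a i) (m i)‖ = ∏ i, ‖poch (a i) (m i)‖ := norm_prod _ _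
    _ ≤ ∏ i, (∑ i, ‖a i‖ + 1) ^ m i * ((m i)! : ℝ) := by
        refine prod_le_prod (fun _ _ => norm_nonneg _) fun i _ => (norm_poch_le _ _).trans ?_
        have : ‖a i‖ ≤ ∑ i, ‖a i‖ := single_le_sum (fun _ _ => norm_nonneg _) (mem_univ i)
        gcongr
    _ = (∑ i, ‖a i‖ + 1) ^ (∑ i, m i) * ∏ i, ((m i)! : ℝ) := by
        rw [prod_mul_distrib, prod_pow_eq_pow_sum]
    _ ≤ (∑ i, ‖a i‖ + 1) ^ (∑ i, m i) * (∑ i, m i)! := by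
        gcongr
        exact_mod_cast
          Nat.le_of_dvd (Nat.factorial_pos _) (Nat.prod_factorial_dvd_factorial_sum _ _)

lemma prod_factorial_le_pow_mul_norm_prod_poch {a : ι → ℂ} {M : ℝ}
    (hM : ∀ i (j : ℕ), (j + 1 : ℝ) ≤ M * ‖a i + j‖) (m : ι → ℕ) :
    (∏ i, (m i)! : ℝ) ≤ M ^ (∑ i, m i) * ‖∏ i, poch (a i) (m i)‖ := by
  rw [norm_prod, ← prod_pow_eq_pow_sum, ← prod_mul_distrib]
  exact prod_le_prod (fun _ _ => by positivity) fun i _ =>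
    factorial_le_pow_mul_norm_poch (hM i) (m i)

end Pochhammer

lemma Nat.multinomial_univ_le_card_pow {α : Type*} [Fintype α] (f : α → ℕ) :
    Nat.multinomial univ f ≤ Fintype.card α ^ ∑ i, f i := by
  classical
  have h := sum_pow_eq_sum_piAntidiag (R := ℕ) (univ : Finset α) (fun _ => 1) (∑ i, f i)
  simp only [sum_const, smul_eq_mul, mul_one, one_pow, prod_const_one, Nat.cast_id] at h
  rw [← Finset.card_univ, h]
  exact single_le_sum (fun _ _ => Nat.zero_le _) (mem_piAntidiag.2 ⟨rfl, by simp⟩)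

lemma Nat.factorial_sum_le_card_pow_mul_prod_factorial {α : Type*} [Fintype α] (f : α → ℕ) :
    (∑ i, f i)! ≤ Fintype.card α ^ (∑ i, f i) * ∏ i, (f i)! := by
  rw [← Nat.multinomial_spec, mul_comm]
  exact Nat.mul_le_mul_right _ (Nat.multinomial_univ_le_card_pow f)

section ScaleCoeff

variable {σ R : Type*} [CommSemiring R]

def scaleCoeff (c : (σ →₀ ℕ) → R) (f : MvPowerSeries σ R) : MvPowerSeries σ R :=
  fun m => c m * MvPowerSeries.coeff m f

@[simp]
lemma coeff_scaleCoeff (c : (σ →₀ ℕ) → R) (f : MvPowerSeries σ R) (m : σ →₀ ℕ) :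
    MvPowerSeries.coeff m (scaleCoeff c f) = c m * MvPowerSeries.coeff m f :=
  rfl

lemma isLinearMap_scaleCoeff (c : (σ →₀ ℕ) → R) : IsLinearMap R (scaleCoeff c) where
  map_add f g := MvPowerSeries.ext fun m => by simp [mul_add]
  map_smul r f := MvPowerSeries.ext fun m => by simp [mul_left_comm]

lemma scaleCoeff_scaleCoeff_of_mul_eq_one {c d : (σ →₀ ℕ) → R} (hcd : ∀ m, c m * d m = 1)
    (f : MvPowerSeries σ R) : scaleCoeff c (scaleCoeff d f) = f :=
  MvPowerSeries.ext fun m => by simp [← mul_assoc, hcd]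

end ScaleCoeff

section PosRadius

variable {n : ℕ}

def HasGeometricBound (c : (Fin n →₀ ℕ) → ℂ) : Prop :=
  ∃ C R : ℝ, 0 < R ∧ ∀ m, ‖c m‖ ≤ C * R ^ (m.sum fun _ k => k)

lemma hasPosRadius_scaleCoeff {c : (Fin n →₀ ℕ) → ℂ} (hc : HasGeometricBound c)
    {f : MvPowerSeries (Fin n) ℂ} (hf : HasPosRadius f) : HasPosRadius (scaleCoeff c f) := by
  obtain ⟨C, R, hR, hcR⟩ := hc
  obtain ⟨r, hr, hsum⟩ := hf
  refine ⟨r / R, by positivity,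
    (hsum.mul_left C).of_nonneg_of_le (fun m => by positivity) fun m => ?_⟩
  set N := m.sum fun _ k => k
  calc ‖MvPowerSeries.coeff m (scaleCoeff c f)‖ * (r / R) ^ N
      = ‖c m‖ * (‖MvPowerSeries.coeff m f‖ * (r / R) ^ N) := by
        rw [coeff_scaleCoeff, norm_mul, mul_assoc]
    _ ≤ C * R ^ N * (‖MvPowerSeries.coeff m f‖ * (r / R) ^ N) := by
        gcongr
        exact hcR m
    _ = C * (‖MvPowerSeries.coeff m f‖ * r ^ N) := by
        rw [div_pow]
        field_simp

lemma bijOn_scaleCoeff_hasPosRadius {c d : (Fin n →₀ ℕ) → ℂ} (hcd : ∀ m, c m * d m = 1)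
    (hc : HasGeometricBound c) (hd : HasGeometricBound d) :
    Set.BijOn (scaleCoeff c) {f | HasPosRadius f} {f | HasPosRadius f} := by
  have hdc (m) : d m * c m = 1 := by rw [mul_comm, hcd]
  exact Set.InvOn.bijOn
    ⟨fun f _ => scaleCoeff_scaleCoeff_of_mul_eq_one hdc f,
      fun f _ => scaleCoeff_scaleCoeff_of_mul_eq_one hcd f⟩
    (fun _ hf => hasPosRadius_scaleCoeff hc hf) (fun _ hf => hasPosRadius_scaleCoeff hd hf)

end PosRadius

section Multipliers

variable {n : ℕ} {lam : Fin n → ℂ} {μ : ℂ}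

lemma finsupp_sum_id_eq_sum (m : Fin n →₀ ℕ) : (m.sum fun _ k => k) = ∑ i, m i :=
  Finsupp.sum_fintype _ _ fun _ => rfl

lemma Kcoef_mul_Lcoef (hlam : ∀ i (j : ℕ), lam i + j ≠ 0)
    (hμ : ∀ j : ℕ, (∑ i, lam i) + μ + j ≠ 0) (m : Fin n →₀ ℕ) :
    Kcoef lam μ m * Lcoef lam μ m = 1 := by
  have : ∏ i, poch (lam i) (m i) ≠ 0 := prod_ne_zero_iff.2 fun i _ => poch_ne_zero (hlam i) _
  have := poch_ne_zero hμ (m.sum fun _ k => k)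
  have : ∏ i, Gamma (lam i) ≠ 0 :=
    prod_ne_zero_iff.2 fun i _ => Gamma_ne_zero_of_add_natCast_ne_zero (hlam i)
  have := Gamma_ne_zero_of_add_natCast_ne_zero hμ
  rw [Kcoef, Lcoef]
  field_simp

lemma hasGeometricBound_Kcoef (hμ : ∀ j : ℕ, (∑ i, lam i) + μ + j ≠ 0) :
    HasGeometricBound (Kcoef lam μ) := by
  obtain ⟨M, hM, hM0⟩ :=
    ((eventually_forall_natCast_add_one_le_mul_norm hμ).and (eventually_gt_atTop 0)).exists
  refine ⟨‖(∏ i, Gamma (lam i)) / Gamma ((∑ i, lam i) + μ)‖, (∑ i, ‖lam i‖ + 1) * M,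
    by positivity, fun m => ?_⟩
  rw [Kcoef, norm_mul, finsupp_sum_id_eq_sum]
  gcongr
  set N := ∑ i, m i
  have hpoch := norm_pos_iff.2 (poch_ne_zero hμ N)
  rw [norm_div, div_le_iff₀ hpoch]
  calc ‖∏ i, poch (lam i) (m i)‖ ≤ (∑ i, ‖lam i‖ + 1) ^ N * N ! := norm_prod_poch_le lam m
    _ ≤ (∑ i, ‖lam i‖ + 1) ^ N * (M ^ N * ‖poch ((∑ i, lam i) + μ) N‖) := by
        gcongr
        exact factorial_le_pow_mul_norm_poch hM N
    _ = ((∑ i, ‖lam i‖ + 1) * M) ^ N * ‖poch ((∑ i, lam i) + μ) N‖ := by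
        rw [mul_pow]; ring

lemma hasGeometricBound_Lcoef (hlam : ∀ i (j : ℕ), lam i + j ≠ 0) :
    HasGeometricBound (Lcoef lam μ) := by
  obtain ⟨M, hM, hM0⟩ := ((eventually_all.2 fun i =>
    eventually_forall_natCast_add_one_le_mul_norm (hlam i)).and (eventually_gt_atTop 0)).exists
  refine ⟨‖Gamma ((∑ i, lam i) + μ) / ∏ i, Gamma (lam i)‖,
    (‖(∑ i, lam i) + μ‖ + 1) * (n + 1) * M, by positivity, fun m => ?_⟩
  rw [Lcoef, norm_mul, finsupp_sum_id_eq_sum]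
  gcongr
  set N := ∑ i, m i
  have hpoch : 0 < ‖∏ i, poch (lam i) (m i)‖ :=
    norm_pos_iff.2 (prod_ne_zero_iff.2 fun i _ => poch_ne_zero (hlam i) (m i))
  rw [norm_div, div_le_iff₀ hpoch]
  have hfact : (N ! : ℝ) ≤ (n + 1) ^ N * ∏ i, ((m i)! : ℝ) := by
    have := Nat.factorial_sum_le_card_pow_mul_prod_factorial m
    rw [Fintype.card_fin] at this
    calc (N ! : ℝ) ≤ n ^ N * ∏ i, ((m i)! : ℝ) := by exact_mod_cast this
      _ ≤ (n + 1) ^ N * ∏ i, ((m i)! : ℝ) := by gcongr; linarith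
  calc ‖poch ((∑ i, lam i) + μ) N‖ ≤ (‖(∑ i, lam i) + μ‖ + 1) ^ N * N ! := norm_poch_le _ _
    _ ≤ (‖(∑ i, lam i) + μ‖ + 1) ^ N *
          ((n + 1) ^ N * (M ^ N * ‖∏ i, poch (lam i) (m i)‖)) := by
        gcongr
        exact hfact.trans (by gcongr; exact prod_factorial_le_pow_mul_norm_prod_poch hM m)
    _ = ((‖(∑ i, lam i) + μ‖ + 1) * (n + 1) * M) ^ N * ‖∏ i, poch (lam i) (m i)‖ := by
        rw [mul_pow, mul_pow]; ring

end Multipliers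

theorem stmt10_general (n : ℕ) (lam : Fin n → ℂ)
    (hlam : ∀ ν, ∀ k : ℤ, k ≤ 0 → lam ν ≠ (k : ℂ))
    (μ : ℂ) (hμ : ∀ k : ℤ, k ≤ 0 → (∑ i, lam i) + μ ≠ (k : ℂ)) :
    (∀ m : Fin n →₀ ℕ,
      (∏ i, poch (lam i) (m i)) ≠ 0 ∧
        poch ((∑ i, lam i) + μ) (m.sum fun _ k => k) ≠ 0) ∧
    IsLinearMap ℂ (Kmap lam μ) ∧ IsLinearMap ℂ (Lmap lam μ) ∧
    (∀ f, Kmap lam μ (Lmap lam μ f) = f) ∧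
    (∀ f, Lmap lam μ (Kmap lam μ f) = f) ∧
    Set.BijOn (Kmap lam μ) {f | HasPosRadius f} {f | HasPosRadius f} ∧
    Set.BijOn (Lmap lam μ) {f | HasPosRadius f} {f | HasPosRadius f} := by
  have hlam' (i : Fin n) := add_natCast_ne_zero_of_ne_intCast (hlam i)
  have hμ' := add_natCast_ne_zero_of_ne_intCast hμ
  have hKL := Kcoef_mul_Lcoef hlam' hμ'
  have hLK (m : Fin n →₀ ℕ) : Lcoef lam μ m * Kcoef lam μ m = 1 := by rw [mul_comm, hKL]
  have hK := hasGeometricBound_Kcoef (lam := lam) hμ'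
  have hL := hasGeometricBound_Lcoef (μ := μ) hlam'
  exact ⟨fun m => ⟨prod_ne_zero_iff.2 fun i _ => poch_ne_zero (hlam' i) _, poch_ne_zero hμ' _⟩,
    isLinearMap_scaleCoeff _, isLinearMap_scaleCoeff _,
    scaleCoeff_scaleCoeff_of_mul_eq_one hKL, scaleCoeff_scaleCoeff_of_mul_eq_one hLK,
    bijOn_scaleCoeff_hasPosRadius hKL hK hL, bijOn_scaleCoeff_hasPosRadius hLK hL hK⟩

theorem stmt10 (n : ℕ) (hn : 1 ≤ n) (lam : Fin n → ℂ)
    (hlam : ∀ ν, ∀ k : ℤ, k ≤ 0 → lam ν ≠ (k : ℂ))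
    (μ : ℂ) (hμ : ∀ k : ℤ, k ≤ 0 → (∑ i, lam i) + μ ≠ (k : ℂ)) :
    (∀ m : Fin n →₀ ℕ,
      (∏ i, poch (lam i) (m i)) ≠ 0 ∧
        poch ((∑ i, lam i) + μ) (m.sum fun _ k => k) ≠ 0) ∧
    IsLinearMap ℂ (Kmap lam μ) ∧ IsLinearMap ℂ (Lmap lam μ) ∧
    (∀ f, Kmap lam μ (Lmap lam μ f) = f) ∧
    (∀ f, Lmap lam μ (Kmap lam μ f) = f) ∧
    Set.BijOn (Kmap lam μ) {f | HasPosRadius f} {f | HasPosRadius f} ∧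
    Set.BijOn (Lmap lam μ) {f | HasPosRadius f} {f | HasPosRadius f} :=
  stmt10_general n lam hlam μ hμ
end
end
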